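/- arXiv:0707.0538 — 7 statements merged into one kernel-verified Lean document; each statement's English description precedes it below -/
import Mathlib

section
/- Let 0 < α < 2, let λ be a nonzero finite measure on the unit sphere S of ℝ^d, and let ν(B) = ∫_S λ(dξ) ∫_0^∞ 1_B(rξ) r^{-α-1} dr (the Lévy measure of an α-stable law). Then its dual ν' (defined by ν'(B) = ∫ 1_B(x/|x|²)|x|² ν(dx)) satisfies ν'(B) = ∫_S λ(dξ) ∫_0^∞ 1_B(uξ) u^{-(2-α)-1} du; that is, ν' is the Lévy measure of a (2-α)-stable law with the same spherical measure λ. -/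
open MeasureTheory Set ENNReal

/-!
In polar coordinates `x = r ξ` the inversion `x ↦ x / ‖x‖²` fixes the direction `ξ` and sends
the radius `r` to `u = r⁻¹`. The weight `‖x‖² = r²` and the Jacobian `dr = u⁻² du` turn
`r ^ (-α - 1) dr` into `u ^ (α - 3) du = u ^ (-(2 - α) - 1) du`.
-/

noncomputable section

def stableRadialMeasure (α : ℝ) : Measure ℝ :=
  (volume.restrict (Ioi 0)).withDensity fun r => ENNReal.ofReal (r ^ (-α - 1))

def polarMeasure {E : Type*} [MeasurableSpace E] [SMul ℝ E] (lam : Measure E) (ρ : Measure ℝ) :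
    Measure E :=
  (lam.prod ρ).map fun p => p.2 • p.1

instance (α : ℝ) : SFinite (stableRadialMeasure α) := by
  unfold stableRadialMeasure; infer_instance

end

lemma lintegral_stableRadialMeasure (α : ℝ) (f : ℝ → ℝ≥0∞) :
    ∫⁻ r, f r ∂stableRadialMeasure α = ∫⁻ r in Ioi 0, f r * ENNReal.ofReal (r ^ (-α - 1)) := by
  rw [stableRadialMeasure, lintegral_withDensity_eq_lintegral_mul_non_measurable _ (by fun_prop)
    (ae_of_all _ fun _ => ofReal_lt_top)]
  simp only [Pi.mul_apply, mul_comm]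

section Polar

variable {E : Type*} [MeasurableSpace E] [SMul ℝ E] [MeasurableSMul₂ ℝ E]
  {lam : Measure E} {ρ : Measure ℝ} [SFinite ρ]

lemma lintegral_polarMeasure {g : E → ℝ≥0∞} (hg : Measurable g) :
    ∫⁻ x, g x ∂polarMeasure lam ρ = ∫⁻ ξ, ∫⁻ r, g (r • ξ) ∂ρ ∂lam := by
  rw [polarMeasure, lintegral_map hg (by fun_prop), lintegral_prod _ (by fun_prop)]

lemma polarMeasure_apply {B : Set E} (hB : MeasurableSet B) :
    polarMeasure lam ρ B = ∫⁻ ξ, ∫⁻ r, B.indicator (fun _ => 1) (r • ξ) ∂ρ ∂lam := by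
  rw [← lintegral_polarMeasure (measurable_const.indicator hB), lintegral_indicator_const hB,
    one_mul]

end Polar

lemma eq_polarMeasure_stableRadialMeasure {E : Type*} [MeasurableSpace E] [SMul ℝ E]
    [MeasurableSMul₂ ℝ E] {α : ℝ} {lam ν : Measure E}
    (hν : ∀ B : Set E, MeasurableSet B →
      ν B = ∫⁻ ξ, (∫⁻ r in Ioi (0 : ℝ),
        B.indicator (fun _ => (1 : ℝ≥0∞)) (r • ξ) * ENNReal.ofReal (r ^ (-α - 1))) ∂lam) :
    ν = polarMeasure lam (stableRadialMeasure α) := by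
  ext B hB
  rw [hν B hB, polarMeasure_apply hB]
  refine lintegral_congr fun ξ => ?_
  exact (lintegral_stableRadialMeasure α fun r => B.indicator _ (r • ξ)).symm

lemma lintegral_Ioi_comp_inv_mul_rpow (f : ℝ → ℝ≥0∞) (β : ℝ) :
    ∫⁻ r in Ioi 0, f r⁻¹ * ENNReal.ofReal (r ^ β) =
      ∫⁻ u in Ioi 0, f u * ENNReal.ofReal (u ^ (-β - 2)) := by
  have himage : Inv.inv '' Ioi (0 : ℝ) = Ioi 0 := by
    ext u
    exact ⟨fun ⟨r, hr, hu⟩ => hu ▸ mem_Ioi.2 (inv_pos.2 hr),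
      fun hu => ⟨u⁻¹, mem_Ioi.2 (inv_pos.2 hu), inv_inv u⟩⟩
  conv_rhs => rw [← himage]
  rw [lintegral_image_eq_lintegral_abs_deriv_mul measurableSet_Ioi
    (fun r hr => (hasDerivAt_inv (ne_of_gt hr)).hasDerivWithinAt) inv_injective.injOn]
  refine setLIntegral_congr_fun measurableSet_Ioi fun r (hr : 0 < r) => ?_
  have hweight : ENNReal.ofReal (r ^ β) =
      ENNReal.ofReal |-(r ^ 2)⁻¹| * ENNReal.ofReal (r⁻¹ ^ (-β - 2)) := by
    rw [← ENNReal.ofReal_mul (abs_nonneg _), abs_neg, abs_of_pos (by positivity),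
      Real.inv_rpow hr.le, ← Real.rpow_neg hr.le, ← Real.rpow_natCast, ← Real.rpow_neg hr.le,
      ← Real.rpow_add hr]
    ring_nf
  rw [hweight]
  ring

lemma lintegral_stableRadialMeasure_inversion {E : Type*} [NormedAddCommGroup E]
    [NormedSpace ℝ E] (α : ℝ) {ξ : E} (hξ : ‖ξ‖ = 1) (B : Set E) :
    ∫⁻ r, ({0}ᶜ : Set E).indicator
        (fun x => B.indicator (fun _ => 1) ((‖x‖ ^ 2)⁻¹ • x) * (‖x‖₊ : ℝ≥0∞) ^ 2) (r • ξ)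
        ∂stableRadialMeasure α =
      ∫⁻ u in Ioi 0, B.indicator (fun _ => 1) (u • ξ) * ENNReal.ofReal (u ^ (-(2 - α) - 1)) := by
  rw [lintegral_stableRadialMeasure]
  calc
    _ = ∫⁻ r in Ioi 0, B.indicator (fun _ => 1) (r⁻¹ • ξ) * ENNReal.ofReal (r ^ (1 - α)) := by
        refine setLIntegral_congr_fun measurableSet_Ioi fun r (hr : 0 < r) => ?_
        have hnorm : ‖r • ξ‖ = r := by rw [norm_smul, hξ, Real.norm_of_nonneg hr.le, mul_one]
        have hne : r • ξ ≠ 0 := norm_ne_zero_iff.1 (by rw [hnorm]; exact hr.ne')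
        have hinv : (‖r • ξ‖ ^ 2)⁻¹ • (r • ξ) = r⁻¹ • ξ := by
          rw [hnorm, smul_smul]; congr 1; field_simp
        have hweight : ((‖r • ξ‖₊ : ℝ≥0∞) ^ 2) * ENNReal.ofReal (r ^ (-α - 1)) =
            ENNReal.ofReal (r ^ (1 - α)) := by
          rw [← ENNReal.ofReal_coe_nnreal, coe_nnnorm, hnorm, ← ENNReal.ofReal_pow hr.le,
            ← ENNReal.ofReal_mul (by positivity), ← Real.rpow_natCast, ← Real.rpow_add hr]
          ring_nf
        rw [indicator_of_mem (mem_compl_singleton_iff.2 hne), hinv, mul_assoc, hweight]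
    _ = _ := by
        rw [lintegral_Ioi_comp_inv_mul_rpow (fun u => B.indicator _ (u • ξ)),
          show -(1 - α) - 2 = -(2 - α) - 1 by ring]

theorem stmt_7_general {d : ℕ} (α : ℝ)
    (lam : Measure (EuclideanSpace ℝ (Fin d)))
    (hlamS : lam {ξ : EuclideanSpace ℝ (Fin d) | ‖ξ‖ = 1}ᶜ = 0)
    (ν ν' : Measure (EuclideanSpace ℝ (Fin d)))
    (hν : ∀ B : Set (EuclideanSpace ℝ (Fin d)), MeasurableSet B →
      ν B = ∫⁻ ξ, (∫⁻ r in Ioi (0 : ℝ),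
        B.indicator (fun _ => (1 : ℝ≥0∞)) (r • ξ) * ENNReal.ofReal (r ^ (-α - 1))) ∂lam)
    (hdual : ∀ B : Set (EuclideanSpace ℝ (Fin d)), MeasurableSet B →
      ν' B = ∫⁻ x in ({0}ᶜ : Set (EuclideanSpace ℝ (Fin d))),
        B.indicator (fun _ => (1 : ℝ≥0∞)) ((‖x‖ ^ 2)⁻¹ • x) * (‖x‖₊ : ℝ≥0∞) ^ 2 ∂ν) :
    ∀ B : Set (EuclideanSpace ℝ (Fin d)), MeasurableSet B →
      ν' B = ∫⁻ ξ, (∫⁻ u in Ioi (0 : ℝ),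
        B.indicator (fun _ => (1 : ℝ≥0∞)) (u • ξ) *
          ENNReal.ofReal (u ^ (-(2 - α) - 1))) ∂lam := by
  intro B hB
  have hunit : ∀ᵐ ξ ∂lam, ‖ξ‖ = 1 := ae_iff.2 hlamS
  have hg : Measurable fun x : EuclideanSpace ℝ (Fin d) =>
      B.indicator (fun _ => (1 : ℝ≥0∞)) ((‖x‖ ^ 2)⁻¹ • x) * (‖x‖₊ : ℝ≥0∞) ^ 2 :=
    ((measurable_const.indicator hB).comp (by fun_prop)).mul (by fun_prop)
  have hzero : MeasurableSet ({0}ᶜ : Set (EuclideanSpace ℝ (Fin d))) :=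
    (measurableSet_singleton 0).compl
  rw [hdual B hB, eq_polarMeasure_stableRadialMeasure hν, ← lintegral_indicator hzero,
    lintegral_polarMeasure (hg.indicator hzero)]
  exact lintegral_congr_ae
    (hunit.mono fun ξ hξ => lintegral_stableRadialMeasure_inversion α hξ B)

/-- The dual of the Lévy measure of an `α`-stable law (`0 < α < 2`) with spherical
measure `λ` is the Lévy measure of a `(2-α)`-stable law with the same spherical measure. -/
theorem stmt_7 {d : ℕ} (α : ℝ) (hα : 0 < α) (hα2 : α < 2)
    (lam : Measure (EuclideanSpace ℝ (Fin d)))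
    (hlamfin : IsFiniteMeasure lam) (hlamne : lam ≠ 0)
    (hlamS : lam {ξ : EuclideanSpace ℝ (Fin d) | ‖ξ‖ = 1}ᶜ = 0)
    (ν ν' : Measure (EuclideanSpace ℝ (Fin d)))
    (hν : ∀ B : Set (EuclideanSpace ℝ (Fin d)), MeasurableSet B →
      ν B = ∫⁻ ξ, (∫⁻ r in Ioi (0 : ℝ),
        B.indicator (fun _ => (1 : ℝ≥0∞)) (r • ξ) * ENNReal.ofReal (r ^ (-α - 1))) ∂lam)
    (hdual : ∀ B : Set (EuclideanSpace ℝ (Fin d)), MeasurableSet B →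
      ν' B = ∫⁻ x in ({0}ᶜ : Set (EuclideanSpace ℝ (Fin d))),
        B.indicator (fun _ => (1 : ℝ≥0∞)) ((‖x‖ ^ 2)⁻¹ • x) * (‖x‖₊ : ℝ≥0∞) ^ 2 ∂ν) :
    ∀ B : Set (EuclideanSpace ℝ (Fin d)), MeasurableSet B →
      ν' B = ∫⁻ ξ, (∫⁻ u in Ioi (0 : ℝ),
        B.indicator (fun _ => (1 : ℝ≥0∞)) (u • ξ) *
          ENNReal.ofReal (u ^ (-(2 - α) - 1))) ∂lam :=
  stmt_7_general α lam hlamS ν ν' hν hdual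
end

section
/- Let -∞ ≤ A' < B' ≤ ∞ and let G : (A',B') → ℝ be increasing, right-continuous, not constant, with A = inf G, B = sup G, and F(s) = inf{u ∈ (A',B') : G(u) > s} for s ∈ (A,B). Then G(u) = inf{s ∈ (A,B) : F(s) > u} for all u ∈ (A',B'), with the convention inf ∅ = B. -/
/-!
Both inequalities come from comparing `F` with `G` pointwise. If `s < G u` then `u` lies in the set
whose infimum is `F s`, so `F s ≤ u`; hence every `s` with `u < F s` satisfies `G u ≤ s`.
Conversely, if `G u < s` then by right-continuity `G < s` on some interval `[u, u + ε)`, and by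
monotonicity also to the left of `u`, so `F s ≥ u + ε > u`; letting `s` decrease to `G u` gives the
other inequality.
-/

open MeasureTheory Set ENNReal

section GeneralizedInverse

variable {I : Set ℝ} {G : ℝ → ℝ} {s u w : ℝ}

lemma MonotoneOn.mem_lowerBounds_setOf_lt (hmono : MonotoneOn G I) (hw : w ∈ I) (hws : G w ≤ s) :
    w ∈ lowerBounds {v | v ∈ I ∧ s < G v} := by
  rintro v ⟨hv, hsv⟩
  by_contra! hvw
  exact (hmono hv hw hvw.le).not_gt (hws.trans_lt hsv)

lemma MonotoneOn.csInf_setOf_lt_le (hmono : MonotoneOn G I) (hw : w ∈ I) (hws : G w ≤ s)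
    (hu : u ∈ I) (hsu : s < G u) : sInf {v | v ∈ I ∧ s < G v} ≤ u :=
  csInf_le ⟨w, hmono.mem_lowerBounds_setOf_lt hw hws⟩ ⟨hu, hsu⟩

lemma MonotoneOn.lt_csInf_setOf_lt (hmono : MonotoneOn G I) (hu : u ∈ I)
    (hrc : ContinuousWithinAt G (I ∩ Ici u) u) (hGu : G u < s)
    (hne : {v | v ∈ I ∧ s < G v}.Nonempty) : u < sInf {v | v ∈ I ∧ s < G v} := by
  obtain ⟨ε, hε, hball⟩ := Metric.mem_nhdsWithin_iff.mp (hrc.eventually (gt_mem_nhds hGu))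
  refine (lt_add_of_pos_right u hε).trans_le (le_csInf hne ?_)
  rintro v ⟨hv, hsv⟩
  have huv : u < v := by
    by_contra! hvu
    exact (hmono hv hu hvu).not_gt (hGu.trans hsv)
  by_contra! hvε
  have hv_ball : v ∈ Metric.ball u ε := by
    rw [Metric.mem_ball, Real.dist_eq, abs_of_pos (sub_pos.mpr huv)]
    linarith
  exact (hball ⟨hv_ball, hv, huv.le⟩ : G v < s).not_gt hsv

end GeneralizedInverse

theorem stmt_11_general (A' B' : EReal) (G : ℝ → ℝ)
    (hmono : MonotoneOn G {u : ℝ | A' < (u : EReal) ∧ (u : EReal) < B'})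
    (hrc : ∀ u : ℝ, A' < (u : EReal) → (u : EReal) < B' →
      ContinuousWithinAt G ({u : ℝ | A' < (u : EReal) ∧ (u : EReal) < B'} ∩ Ici u) u)
    (A B : EReal)
    (hA : A = sInf {x : EReal | ∃ u : ℝ,
      (A' < (u : EReal) ∧ (u : EReal) < B') ∧ x = (G u : EReal)})
    (hB : B = sSup {x : EReal | ∃ u : ℝ,
      (A' < (u : EReal) ∧ (u : EReal) < B') ∧ x = (G u : EReal)})
    (F : ℝ → ℝ)
    (hF : ∀ s : ℝ, A < (s : EReal) → (s : EReal) < B →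
      F s = sInf {u : ℝ | (A' < (u : EReal) ∧ (u : EReal) < B') ∧ s < G u}) :
    ∀ u : ℝ, A' < (u : EReal) → (u : EReal) < B' →
      (G u : EReal) = sInf ({x : EReal | ∃ s : ℝ,
        (A < (s : EReal) ∧ (s : EReal) < B) ∧ u < F s ∧ x = (s : EReal)} ∪ {B}) := by
  intro u hu₁ hu₂
  have hu : u ∈ {u : ℝ | A' < (u : EReal) ∧ (u : EReal) < B'} := ⟨hu₁, hu₂⟩
  have hGuB : (G u : EReal) ≤ B := hB ▸ le_sSup ⟨u, hu, rfl⟩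
  have hAGu : A ≤ (G u : EReal) := hA ▸ sInf_le ⟨u, hu, rfl⟩
  apply le_antisymm
  · refine le_sInf ?_
    rintro _ (⟨s, ⟨hAs, hsB⟩, huF, rfl⟩ | rfl)
    · by_contra! hsGu
      obtain ⟨_, ⟨w, hw, rfl⟩, hws⟩ := sInf_lt_iff.mp (hA ▸ hAs)
      have hFu : F s ≤ u := hF s hAs hsB ▸
        hmono.csInf_setOf_lt_le hw (EReal.coe_lt_coe_iff.mp hws).le hu
          (EReal.coe_lt_coe_iff.mp hsGu)
      exact hFu.not_gt huF
    · exact hGuB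
  · refine le_of_forall_gt_imp_ge_of_dense fun c hGuc => ?_
    rcases le_or_gt B c with hBc | hcB
    · exact (sInf_le (mem_union_right _ (mem_singleton B))).trans hBc
    obtain ⟨s, hGus, hsc⟩ := EReal.exists_between_coe_real hGuc
    have hsB : (s : EReal) < B := hsc.trans hcB
    have hAs : A < (s : EReal) := hAGu.trans_lt hGus
    obtain ⟨_, ⟨w, hw, rfl⟩, hsw⟩ := lt_sSup_iff.mp (hB ▸ hsB)
    have huF : u < F s := by
      rw [hF s hAs hsB]
      exact hmono.lt_csInf_setOf_lt hu (hrc u hu₁ hu₂) (EReal.coe_lt_coe_iff.mp hGus)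
        ⟨w, hw, EReal.coe_lt_coe_iff.mp hsw⟩
    refine (sInf_le ?_).trans hsc.le
    exact Or.inl ⟨s, ⟨hAs, hsB⟩, huF, rfl⟩

/-- `G` is recovered from its generalized inverse `F`:
`G(u) = inf{s ∈ (A,B) : F(s) > u}` with the convention `inf ∅ = B`. -/
theorem stmt_11 (A' B' : EReal) (hA'B' : A' < B') (G : ℝ → ℝ)
    (hmono : MonotoneOn G {u : ℝ | A' < (u : EReal) ∧ (u : EReal) < B'})
    (hrc : ∀ u : ℝ, A' < (u : EReal) → (u : EReal) < B' →
      ContinuousWithinAt G ({u : ℝ | A' < (u : EReal) ∧ (u : EReal) < B'} ∩ Ici u) u)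
    (hnc : ∃ u v : ℝ, (A' < (u : EReal) ∧ (u : EReal) < B') ∧
      (A' < (v : EReal) ∧ (v : EReal) < B') ∧ G u ≠ G v)
    (A B : EReal)
    (hA : A = sInf {x : EReal | ∃ u : ℝ,
      (A' < (u : EReal) ∧ (u : EReal) < B') ∧ x = (G u : EReal)})
    (hB : B = sSup {x : EReal | ∃ u : ℝ,
      (A' < (u : EReal) ∧ (u : EReal) < B') ∧ x = (G u : EReal)})
    (F : ℝ → ℝ)
    (hF : ∀ s : ℝ, A < (s : EReal) → (s : EReal) < B →
      F s = sInf {u : ℝ | (A' < (u : EReal) ∧ (u : EReal) < B') ∧ s < G u}) :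
    ∀ u : ℝ, A' < (u : EReal) → (u : EReal) < B' →
      (G u : EReal) = sInf ({x : EReal | ∃ s : ℝ,
        (A < (s : EReal) ∧ (s : EReal) < B) ∧ u < F s ∧ x = (s : EReal)} ∪ {B}) :=
  stmt_11_general A' B' G hmono hrc A B hA hB F hF
end

section
/- Let G : (A',B') → ℝ be increasing, right-continuous, not constant, with A = inf G, B = sup G, and F(s) = inf{u : G(u) > s} for s ∈ (A,B). Then for every nonnegative measurable function h on (A',B'), ∫_{(A',B')} h(u) dG(u) = ∫_{(A,B)} h(F(s)) ds, where dG denotes the Lebesgue–Stieltjes measure of G. -/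
/-!
For `s` strictly between the infimum and supremum of `G` on `I` and `u ∈ I`, monotonicity gives
`s < G u → F s ≤ u`, and right continuity gives `G u < s → u < F s`. Hence `F⁻¹' (c, d]` differs
from `(G c, G d]` only at the endpoints, so the push-forward of Lebesgue measure under `F` gives
every `(c, d] ⊆ I` the mass `G d - G c`. Covering `I` by countably many such intervals, this
push-forward is the Lebesgue–Stieltjes measure of `G` on `I`, and the identity is the change of
variables formula for a push-forward.
-/

open MeasureTheory Set ENNReal

theorem Set.OrdConnected.iUnion_Ioc_rat {I : Set ℝ} (hIo : IsOpen I) (hIc : I.OrdConnected) :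
    ⋃ p : {p : ℚ × ℚ // (p.1 : ℝ) ∈ I ∧ (p.2 : ℝ) ∈ I}, Ioc (p.1.1 : ℝ) p.1.2 = I := by
  refine Subset.antisymm (iUnion_subset fun p => Ioc_subset_Icc_self.trans (hIc.out p.2.1 p.2.2))
    fun u hu => ?_
  obtain ⟨l, r, ⟨hlu, hur⟩, hlr⟩ := mem_nhds_iff_exists_Ioo_subset.1 (hIo.mem_nhds hu)
  obtain ⟨c, hlc, hcu⟩ := exists_rat_btwn hlu
  obtain ⟨d, hud, hdr⟩ := exists_rat_btwn hur
  exact mem_iUnion.2 ⟨⟨(c, d), hlr ⟨hlc, hcu.trans hur⟩, hlr ⟨hlu.trans hud, hdr⟩⟩, hcu, hud.le⟩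

theorem MeasureTheory.Measure.restrict_Ioc_eq_of_forall_Ioc {μ ν : Measure ℝ} {a b : ℝ}
    (hab : a ≤ b) (hfin : μ (Ioc a b) ≠ ∞)
    (h : ∀ c d, a ≤ c → c ≤ d → d ≤ b → μ (Ioc c d) = ν (Ioc c d)) :
    μ.restrict (Ioc a b) = ν.restrict (Ioc a b) := by
  have : IsFiniteMeasure (μ.restrict (Ioc a b)) := ⟨by simpa using hfin.lt_top⟩
  refine Measure.ext_of_Ioc_finite _ _ (by simpa using h a b le_rfl hab le_rfl) fun c d _ => ?_
  rw [Measure.restrict_apply measurableSet_Ioc, Measure.restrict_apply measurableSet_Ioc,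
    Ioc_inter_Ioc]
  rcases le_or_gt (max c a) (min d b) with hcd | hdc
  · exact h _ _ (le_max_right _ _) hcd (min_le_right _ _)
  · simp [Ioc_eq_empty_of_le hdc.le]

theorem Real.volume_eq_ofReal_of_Ioo_subset_of_subset_Icc {s : Set ℝ} {a b : ℝ} (hIoo : Ioo a b ⊆ s)
    (hIcc : s ⊆ Icc a b) : volume s = ENNReal.ofReal (b - a) :=
  le_antisymm (Real.volume_Icc ▸ measure_mono hIcc) (Real.volume_Ioo ▸ measure_mono hIoo)

/-- `sInf` of an empty or unbounded set is `0`: only the values on `openRange G I` matter. -/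
noncomputable def genInv (G : ℝ → ℝ) (I : Set ℝ) (s : ℝ) : ℝ :=
  sInf {u | u ∈ I ∧ s < G u}

/-- The open interval `(inf G '' I, sup G '' I)`. -/
def openRange (G : ℝ → ℝ) (I : Set ℝ) : Set ℝ :=
  {s | (∃ u ∈ I, G u < s) ∧ ∃ v ∈ I, s < G v}

section GenInv

variable {G : ℝ → ℝ} {I : Set ℝ} {s u : ℝ}

theorem ordConnected_openRange : (openRange G I).OrdConnected :=
  ⟨fun _ hs _ ht _ hr => ⟨hs.1.imp fun _ hu => ⟨hu.1, hu.2.trans_le hr.1⟩,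
    ht.2.imp fun _ hv => ⟨hv.1, hr.2.trans_lt hv.2⟩⟩⟩

theorem bddBelow_setOf_lt_apply (hG : MonotoneOn G I) (hs : ∃ u ∈ I, G u < s) :
    BddBelow {u | u ∈ I ∧ s < G u} := by
  obtain ⟨u, hu, hGu⟩ := hs
  exact ⟨u, fun w hw => not_lt.1 fun hwu => (hw.2.trans_le (hG hw.1 hu hwu.le)).not_gt hGu⟩

theorem genInv_le (hG : MonotoneOn G I) (hs : s ∈ openRange G I) (hu : u ∈ I) (h : s < G u) :
    genInv G I s ≤ u :=
  csInf_le (bddBelow_setOf_lt_apply hG hs.1) ⟨hu, h⟩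

theorem lt_genInv (hG : MonotoneOn G I) (hrc : ContinuousWithinAt G (I ∩ Ici u) u)
    (hs : s ∈ openRange G I) (hu : u ∈ I) (h : G u < s) : u < genInv G I s := by
  obtain ⟨O, hO, hOsub⟩ := mem_nhdsWithin_iff_exists_mem_nhds_inter.1 (hrc (Iio_mem_nhds h))
  obtain ⟨u', huu', hIco⟩ := exists_Ico_subset_of_mem_nhds hO (exists_gt u)
  refine huu'.trans_le (le_csInf hs.2 fun w hw => not_lt.1 fun hwu' => ?_)
  have huw : u ≤ w := not_lt.1 fun hwu => (hw.2.trans_le (hG hw.1 hu hwu.le)).not_gt h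
  exact (hOsub ⟨hIco ⟨huw, hwu'⟩, hw.1, huw⟩ : G w < s).not_gt hw.2

theorem genInv_mem (hIc : I.OrdConnected) (hG : MonotoneOn G I)
    (hrc : ∀ u ∈ I, ContinuousWithinAt G (I ∩ Ici u) u) (hs : s ∈ openRange G I) :
    genInv G I s ∈ I := by
  obtain ⟨u, hu, hGu⟩ := hs.1
  obtain ⟨v, hv, hGv⟩ := hs.2
  exact hIc.out hu hv ⟨(lt_genInv hG (hrc u hu) hs hu hGu).le, genInv_le hG hs hv hGv⟩

theorem monotoneOn_genInv (hG : MonotoneOn G I) : MonotoneOn (genInv G I) (openRange G I) :=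
  fun _ hs _ ht hst => csInf_le_csInf (bddBelow_setOf_lt_apply hG hs.1) ht.2
    fun _ hw => ⟨hw.1, hst.trans_lt hw.2⟩

theorem volume_openRange_inter_genInv_preimage_Ioc (hG : MonotoneOn G I)
    (hrc : ∀ u ∈ I, ContinuousWithinAt G (I ∩ Ici u) u) {c d : ℝ} (hc : c ∈ I) (hd : d ∈ I) :
    volume (openRange G I ∩ genInv G I ⁻¹' Ioc c d) = ENNReal.ofReal (G d - G c) := by
  refine Real.volume_eq_ofReal_of_Ioo_subset_of_subset_Icc (fun s hs => ?_) fun s ⟨hs, hcs, hsd⟩ => ?_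
  · have hsT : s ∈ openRange G I := ⟨⟨c, hc, hs.1⟩, d, hd, hs.2⟩
    exact ⟨hsT, lt_genInv hG (hrc c hc) hsT hc hs.1, genInv_le hG hsT hd hs.2⟩
  · exact ⟨not_lt.1 fun h => (genInv_le hG hs hc h).not_gt hcs,
      not_lt.1 fun h => (lt_genInv hG (hrc d hd) hs hd h).not_ge hsd⟩

theorem map_genInv_volume_restrict_openRange (hG : MonotoneOn G I)
    (hrc : ∀ u ∈ I, ContinuousWithinAt G (I ∩ Ici u) u) (hIo : IsOpen I) (hIc : I.OrdConnected)
    {μ : Measure ℝ} (hμ : ∀ c ∈ I, ∀ d ∈ I, c ≤ d → μ (Ioc c d) = ENNReal.ofReal (G d - G c)) :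
    (volume.restrict (openRange G I)).map (genInv G I) = μ.restrict I := by
  have hT : MeasurableSet (openRange G I) := ordConnected_openRange.measurableSet
  have hF : AEMeasurable (genInv G I) (volume.restrict (openRange G I)) :=
    aemeasurable_restrict_of_monotoneOn hT (monotoneOn_genInv hG)
  set ν := (volume.restrict (openRange G I)).map (genInv G I)
  have hνIoc : ∀ c d, ν (Ioc c d) = volume (openRange G I ∩ genInv G I ⁻¹' Ioc c d) :=
    fun c d => by
      rw [Measure.map_apply_of_aemeasurable hF measurableSet_Ioc, Measure.restrict_apply' hT,
        inter_comm]
  have hνI : ν.restrict I = ν := Measure.restrict_eq_self_of_ae_mem <|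
    (ae_map_iff hF hIo.measurableSet).2 <|
      ae_restrict_of_forall_mem hT fun s hs => genInv_mem hIc hG hrc hs
  refine hνI.symm.trans ?_
  -- `μ` need not be locally finite at the ends of `I`: compare on compact pieces of `I`.
  rw [← hIc.iUnion_Ioc_rat hIo]
  refine Measure.restrict_iUnion_congr.2 fun ⟨(c, d), hc, hd⟩ => ?_
  rcases le_or_gt (c : ℝ) d with hcd | hdc
  · refine (Measure.restrict_Ioc_eq_of_forall_Ioc hcd (by simp [hμ c hc d hd hcd])
      fun c' d' hc' hc'd' hd' => ?_).symm
    have hc'I : c' ∈ I := hIc.out hc hd ⟨hc', hc'd'.trans hd'⟩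
    have hd'I : d' ∈ I := hIc.out hc hd ⟨hc'.trans hc'd', hd'⟩
    rw [hμ c' hc'I d' hd'I hc'd', hνIoc,
      volume_openRange_inter_genInv_preimage_Ioc hG hrc hc'I hd'I]
  · simp [Ioc_eq_empty_of_le hdc.le]

theorem setLIntegral_eq_setLIntegral_openRange_genInv (hG : MonotoneOn G I)
    (hrc : ∀ u ∈ I, ContinuousWithinAt G (I ∩ Ici u) u) (hIo : IsOpen I) (hIc : I.OrdConnected)
    {μ : Measure ℝ} (hμ : ∀ c ∈ I, ∀ d ∈ I, c ≤ d → μ (Ioc c d) = ENNReal.ofReal (G d - G c))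
    {h : ℝ → ℝ≥0∞} (hh : Measurable h) :
    ∫⁻ u in I, h u ∂μ = ∫⁻ s in openRange G I, h (genInv G I s) := by
  rw [← map_genInv_volume_restrict_openRange hG hrc hIo hIc hμ,
    lintegral_map' hh.aemeasurable (aemeasurable_restrict_of_monotoneOn
      ordConnected_openRange.measurableSet (monotoneOn_genInv hG))]

end GenInv

theorem stmt_12_general (A' B' : EReal) (G : ℝ → ℝ)
    (hmono : MonotoneOn G {u : ℝ | A' < (u : EReal) ∧ (u : EReal) < B'})
    (hrc : ∀ u : ℝ, A' < (u : EReal) → (u : EReal) < B' →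
      ContinuousWithinAt G ({u : ℝ | A' < (u : EReal) ∧ (u : EReal) < B'} ∩ Ici u) u)
    (A B : EReal)
    (hA : A = sInf {x : EReal | ∃ u : ℝ,
      (A' < (u : EReal) ∧ (u : EReal) < B') ∧ x = (G u : EReal)})
    (hB : B = sSup {x : EReal | ∃ u : ℝ,
      (A' < (u : EReal) ∧ (u : EReal) < B') ∧ x = (G u : EReal)})
    (F : ℝ → ℝ)
    (hF : ∀ s : ℝ, A < (s : EReal) → (s : EReal) < B →
      F s = sInf {u : ℝ | (A' < (u : EReal) ∧ (u : EReal) < B') ∧ s < G u})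
    (μG : Measure ℝ)
    (hμG : ∀ u v : ℝ, A' < (u : EReal) → u ≤ v → (v : EReal) < B' →
      μG (Ioc u v) = ENNReal.ofReal (G v - G u))
    (h : ℝ → ℝ≥0∞) (hh : Measurable h) :
    ∫⁻ u in {u : ℝ | A' < (u : EReal) ∧ (u : EReal) < B'}, h u ∂μG =
      ∫⁻ s in {s : ℝ | A < (s : EReal) ∧ (s : EReal) < B}, h (F s) := by
  set I : Set ℝ := {u : ℝ | A' < (u : EReal) ∧ (u : EReal) < B'}
  have hIo : IsOpen I := isOpen_Ioo.preimage continuous_coe_real_ereal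
  have hIc : I.OrdConnected := ordConnected_Ioo.preimage_mono EReal.coe_strictMono.monotone
  have hT : {s : ℝ | A < (s : EReal) ∧ (s : EReal) < B} = openRange G I := by
    ext s
    simp only [hA, hB, sInf_lt_iff, lt_sSup_iff, mem_ofPred_eq, existsAndEq, and_true,
      EReal.coe_lt_coe_iff, openRange, I]
  rw [setLIntegral_eq_setLIntegral_openRange_genInv hmono (fun u hu => hrc u hu.1 hu.2) hIo hIc
    (fun c hc d hd hcd => hμG c d hc.1 hcd hd.2) hh, ← hT]
  exact setLIntegral_congr_fun (hT ▸ ordConnected_openRange.measurableSet) fun s hs =>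
    congrArg h (hF s hs.1 hs.2).symm

/-- Change of variables for the Lebesgue–Stieltjes measure of `G`:
`∫_{(A',B')} h(u) dG(u) = ∫_{(A,B)} h(F(s)) ds` where `F` is the
generalized inverse of `G`. -/
theorem stmt_12 (A' B' : EReal) (hA'B' : A' < B') (G : ℝ → ℝ)
    (hmono : MonotoneOn G {u : ℝ | A' < (u : EReal) ∧ (u : EReal) < B'})
    (hrc : ∀ u : ℝ, A' < (u : EReal) → (u : EReal) < B' →
      ContinuousWithinAt G ({u : ℝ | A' < (u : EReal) ∧ (u : EReal) < B'} ∩ Ici u) u)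
    (hnc : ∃ u v : ℝ, (A' < (u : EReal) ∧ (u : EReal) < B') ∧
      (A' < (v : EReal) ∧ (v : EReal) < B') ∧ G u ≠ G v)
    (A B : EReal)
    (hA : A = sInf {x : EReal | ∃ u : ℝ,
      (A' < (u : EReal) ∧ (u : EReal) < B') ∧ x = (G u : EReal)})
    (hB : B = sSup {x : EReal | ∃ u : ℝ,
      (A' < (u : EReal) ∧ (u : EReal) < B') ∧ x = (G u : EReal)})
    (F : ℝ → ℝ)
    (hF : ∀ s : ℝ, A < (s : EReal) → (s : EReal) < B →
      F s = sInf {u : ℝ | (A' < (u : EReal) ∧ (u : EReal) < B') ∧ s < G u})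
    (μG : Measure ℝ)
    (hμG : ∀ u v : ℝ, A' < (u : EReal) → u ≤ v → (v : EReal) < B' →
      μG (Ioc u v) = ENNReal.ofReal (G v - G u))
    (h : ℝ → ℝ≥0∞) (hh : Measurable h) :
    ∫⁻ u in {u : ℝ | A' < (u : EReal) ∧ (u : EReal) < B'}, h u ∂μG =
      ∫⁻ s in {s : ℝ | A < (s : EReal) ∧ (s : EReal) < B}, h (F s) :=
  stmt_12_general A' B' G hmono hrc A B hA hB F hF μG hμG h hh
end

section
/- Let f be decreasing, left-continuous, not constant on an interval (a,b), and satisfy inf_t f(t) < f(s) < sup_t f(t) for all s ∈ (a,b). Then the τ-measure τ of f (pushforward of Lebesgue measure on (a,b) by f) satisfies: with a' = inf Supp(τ) and b' = sup Supp(τ), one has a' < b', τ((p,q)) < ∞ for all a' < p < q < b', τ({a'}) = 0 if a' > -∞, and τ({b'}) = 0 if b' < ∞. -/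
/-!
Left-continuity puts every value `f m` in the support of `τ`: the preimage of a neighbourhood
of `f m` contains an interval `(m - ε, m]`, of positive length. So the support hull `[a', b']`
contains all values of `f`, which gives `a' < b'` since `f` is not constant. The preimage of
`(p, q)` lies between two points of the interval by monotonicity, hence has finite length.
An atom of `τ` at `a'` would be a value `f m = a'`, i.e. a minimum of `f`, which the strict
inequality `inf f < f m` excludes; symmetrically at `b'`.
-/

open MeasureTheory Set ENNReal Filter Topology

theorem EReal.exists_coe_lt_of_sInf_lt {P : ℝ → Prop} {g : ℝ → ℝ} {y : ℝ}
    (h : sInf {x : EReal | ∃ t, P t ∧ x = (g t : EReal)} < y) : ∃ t, P t ∧ g t < y := by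
  obtain ⟨_, ⟨t, ht, rfl⟩, hlt⟩ := sInf_lt_iff.1 h
  exact ⟨t, ht, EReal.coe_lt_coe_iff.1 hlt⟩

theorem EReal.exists_lt_coe_of_lt_sSup {P : ℝ → Prop} {g : ℝ → ℝ} {y : ℝ}
    (h : y < sSup {x : EReal | ∃ t, P t ∧ x = (g t : EReal)}) : ∃ t, P t ∧ y < g t := by
  obtain ⟨_, ⟨t, ht, rfl⟩, hlt⟩ := lt_sSup_iff.1 h
  exact ⟨t, ht, EReal.coe_lt_coe_iff.1 hlt⟩

theorem volume_pos_of_mem_nhdsLE {m : ℝ} {s : Set ℝ} (hs : s ∈ 𝓝[≤] m) : 0 < volume s := by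
  obtain ⟨l, hlm, hsub⟩ := mem_nhdsLE_iff_exists_Ioc_subset.1 hs
  calc 0 < volume (Ioc l m) := by simpa [Real.volume_Ioc] using hlm
    _ ≤ volume s := measure_mono hsub

section PushforwardOfRestrictedVolume

variable {I : Set ℝ} {f : ℝ → ℝ} {τ : Measure ℝ}

theorem exists_apply_mem_of_measure_ne_zero
    (hτ : ∀ B, MeasurableSet B → τ B = volume (I ∩ f ⁻¹' B))
    {B : Set ℝ} (hB : MeasurableSet B) (h : τ B ≠ 0) : ∃ s ∈ I, f s ∈ B := by
  rw [hτ B hB] at h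
  exact nonempty_of_measure_ne_zero h

theorem exists_apply_mem_of_mem_support
    (hτ : ∀ B, MeasurableSet B → τ B = volume (I ∩ f ⁻¹' B))
    {u : ℝ} (hu : u ∈ τ.support) {U : Set ℝ} (hU : IsOpen U) (huU : u ∈ U) :
    ∃ s ∈ I, f s ∈ U := by
  rw [Measure.support_eq_forall_isOpen] at hu
  exact exists_apply_mem_of_measure_ne_zero hτ hU.measurableSet (hu U huU hU).ne'

theorem apply_mem_support_of_continuousWithinAt
    (hτ : ∀ B, MeasurableSet B → τ B = volume (I ∩ f ⁻¹' B))
    {m : ℝ} (hI : I ∈ 𝓝[≤] m) (hf : ContinuousWithinAt f (I ∩ Iic m) m) :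
    f m ∈ τ.support := by
  rw [Measure.support_eq_forall_isOpen]
  intro U hmU hU
  have hpre : f ⁻¹' U ∈ 𝓝[≤] m := by
    rw [← nhdsWithin_inter_of_mem hI]
    exact hf (hU.mem_nhds hmU)
  rw [hτ U hU.measurableSet]
  exact volume_pos_of_mem_nhdsLE (inter_mem hI hpre)

theorem measure_Ioo_lt_top_of_antitoneOn
    (hτ : ∀ B, MeasurableSet B → τ B = volume (I ∩ f ⁻¹' B)) (hf : AntitoneOn f I)
    {p q u v : ℝ} (hu : u ∈ τ.support) (hup : u < p) (hv : v ∈ τ.support) (hqv : q < v) :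
    τ (Ioo p q) < ∞ := by
  obtain ⟨t, ht, htp⟩ := exists_apply_mem_of_mem_support hτ hu isOpen_Iio hup
  obtain ⟨s, hs, hqs⟩ := exists_apply_mem_of_mem_support hτ hv isOpen_Ioi hqv
  have hsub : I ∩ f ⁻¹' Ioo p q ⊆ Ioo s t := by
    rintro r ⟨hr, hpr, hrq⟩
    constructor
    · by_contra! hrs
      exact (hrq.trans hqs).not_ge (hf hr hs hrs)
    · by_contra! htr
      exact (htp.trans hpr).not_ge (hf ht hr htr)
  rw [hτ _ measurableSet_Ioo]
  exact (measure_mono hsub).trans_lt (by simp [Real.volume_Ioo])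

theorem measure_singleton_eq_zero_of_lowerBound_not_attained
    (hτ : ∀ B, MeasurableSet B → τ B = volume (I ∩ f ⁻¹' B))
    (hnomin : ∀ m ∈ I, ∃ t ∈ I, f t < f m) {u : ℝ} (hu : ∀ t ∈ I, u ≤ f t) :
    τ {u} = 0 := by
  by_contra h
  obtain ⟨m, hm, rfl⟩ := exists_apply_mem_of_measure_ne_zero hτ (measurableSet_singleton u) h
  obtain ⟨t, ht, hlt⟩ := hnomin m hm
  exact hlt.not_ge (hu t ht)

theorem measure_singleton_eq_zero_of_upperBound_not_attained
    (hτ : ∀ B, MeasurableSet B → τ B = volume (I ∩ f ⁻¹' B))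
    (hnomax : ∀ m ∈ I, ∃ t ∈ I, f m < f t) {u : ℝ} (hu : ∀ t ∈ I, f t ≤ u) :
    τ {u} = 0 := by
  by_contra h
  obtain ⟨m, hm, rfl⟩ := exists_apply_mem_of_measure_ne_zero hτ (measurableSet_singleton u) h
  obtain ⟨t, ht, hlt⟩ := hnomax m hm
  exact hlt.not_ge (hu t ht)

end PushforwardOfRestrictedVolume

theorem stmt_13_general (a b : EReal) (f : ℝ → ℝ)
    (hanti : AntitoneOn f {s : ℝ | a < (s : EReal) ∧ (s : EReal) < b})
    (hlc : ∀ s : ℝ, a < (s : EReal) → (s : EReal) < b →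
      ContinuousWithinAt f ({s : ℝ | a < (s : EReal) ∧ (s : EReal) < b} ∩ Iic s) s)
    (hnc : ∃ s t : ℝ, (a < (s : EReal) ∧ (s : EReal) < b) ∧
      (a < (t : EReal) ∧ (t : EReal) < b) ∧ f s ≠ f t)
    (hstrict : ∀ s : ℝ, a < (s : EReal) → (s : EReal) < b →
      sInf {x : EReal | ∃ t : ℝ, (a < (t : EReal) ∧ (t : EReal) < b) ∧ x = (f t : EReal)}
        < (f s : EReal) ∧
      (f s : EReal) <
        sSup {x : EReal | ∃ t : ℝ, (a < (t : EReal) ∧ (t : EReal) < b) ∧ x = (f t : EReal)})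
    (τ : Measure ℝ)
    (hτ : ∀ B : Set ℝ, MeasurableSet B →
      τ B = volume {s : ℝ | (a < (s : EReal) ∧ (s : EReal) < b) ∧ f s ∈ B})
    (a' b' : EReal)
    (ha' : a' = sInf {x : EReal | ∃ u : ℝ,
      (∀ U : Set ℝ, IsOpen U → u ∈ U → τ U ≠ 0) ∧ x = (u : EReal)})
    (hb' : b' = sSup {x : EReal | ∃ u : ℝ,
      (∀ U : Set ℝ, IsOpen U → u ∈ U → τ U ≠ 0) ∧ x = (u : EReal)}) :
    a' < b' ∧
      (∀ p q : ℝ, a' < (p : EReal) → p < q → (q : EReal) < b' → τ (Ioo p q) < ⊤) ∧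
      (∀ u : ℝ, a' = (u : EReal) → τ {u} = 0) ∧
      (∀ u : ℝ, b' = (u : EReal) → τ {u} = 0) := by
  set I : Set ℝ := {s : ℝ | a < (s : EReal) ∧ (s : EReal) < b}
  have hIopen : IsOpen I := isOpen_Ioo.preimage continuous_coe_real_ereal
  have hsupp_eq : {x : EReal | ∃ u : ℝ, (∀ U : Set ℝ, IsOpen U → u ∈ U → τ U ≠ 0) ∧
      x = (u : EReal)} = (↑) '' τ.support := by
    ext x
    simp [Measure.support_eq_forall_isOpen, pos_iff_ne_zero, eq_comm, imp.swap]
  rw [hsupp_eq] at ha' hb'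
  have hsupp : ∀ m ∈ I, f m ∈ τ.support := fun m hm =>
    apply_mem_support_of_continuousWithinAt hτ (mem_nhdsWithin_of_mem_nhds (hIopen.mem_nhds hm))
      (hlc m hm.1 hm.2)
  have hlower : ∀ t ∈ I, a' ≤ f t := fun t ht => ha' ▸ sInf_le (mem_image_of_mem _ (hsupp t ht))
  have hupper : ∀ t ∈ I, (f t : EReal) ≤ b' :=
    fun t ht => hb' ▸ le_sSup (mem_image_of_mem _ (hsupp t ht))
  have hnomin : ∀ m ∈ I, ∃ t ∈ I, f t < f m :=
    fun m hm => EReal.exists_coe_lt_of_sInf_lt (hstrict m hm.1 hm.2).1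
  have hnomax : ∀ m ∈ I, ∃ t ∈ I, f m < f t :=
    fun m hm => EReal.exists_lt_coe_of_lt_sSup (hstrict m hm.1 hm.2).2
  refine ⟨?_, ?_, ?_, ?_⟩
  · obtain ⟨s, t, hs, ht, hst⟩ := hnc
    rcases hst.lt_or_gt with hlt | hlt
    · exact (hlower s hs).trans_lt ((EReal.coe_lt_coe_iff.2 hlt).trans_le (hupper t ht))
    · exact (hlower t ht).trans_lt ((EReal.coe_lt_coe_iff.2 hlt).trans_le (hupper s hs))
  · intro p q hp _ hq
    obtain ⟨_, ⟨u, hu, rfl⟩, hup⟩ := sInf_lt_iff.1 (ha' ▸ hp)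
    obtain ⟨_, ⟨v, hv, rfl⟩, hqv⟩ := lt_sSup_iff.1 (hb' ▸ hq)
    exact measure_Ioo_lt_top_of_antitoneOn hτ hanti hu (EReal.coe_lt_coe_iff.1 hup) hv
      (EReal.coe_lt_coe_iff.1 hqv)
  · intro u hu
    refine measure_singleton_eq_zero_of_lowerBound_not_attained hτ hnomin fun t ht => ?_
    exact EReal.coe_le_coe_iff.1 (hu ▸ hlower t ht)
  · intro u hu
    refine measure_singleton_eq_zero_of_upperBound_not_attained hτ hnomax fun t ht => ?_
    exact EReal.coe_le_coe_iff.1 (hu ▸ hupper t ht)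

/-- If `f` satisfies Condition (A) on `(a,b)` (decreasing, left-continuous,
non-constant, strictly between its infimum and supremum), then its `τ`-measure
satisfies Condition (B). -/
theorem stmt_13 (a b : EReal) (hab : a < b) (f : ℝ → ℝ) (hmeas : Measurable f)
    (hanti : AntitoneOn f {s : ℝ | a < (s : EReal) ∧ (s : EReal) < b})
    (hlc : ∀ s : ℝ, a < (s : EReal) → (s : EReal) < b →
      ContinuousWithinAt f ({s : ℝ | a < (s : EReal) ∧ (s : EReal) < b} ∩ Iic s) s)
    (hnc : ∃ s t : ℝ, (a < (s : EReal) ∧ (s : EReal) < b) ∧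
      (a < (t : EReal) ∧ (t : EReal) < b) ∧ f s ≠ f t)
    (hstrict : ∀ s : ℝ, a < (s : EReal) → (s : EReal) < b →
      sInf {x : EReal | ∃ t : ℝ, (a < (t : EReal) ∧ (t : EReal) < b) ∧ x = (f t : EReal)}
        < (f s : EReal) ∧
      (f s : EReal) <
        sSup {x : EReal | ∃ t : ℝ, (a < (t : EReal) ∧ (t : EReal) < b) ∧ x = (f t : EReal)})
    (τ : Measure ℝ)
    (hτ : ∀ B : Set ℝ, MeasurableSet B →
      τ B = volume {s : ℝ | (a < (s : EReal) ∧ (s : EReal) < b) ∧ f s ∈ B})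
    (a' b' : EReal)
    (ha' : a' = sInf {x : EReal | ∃ u : ℝ,
      (∀ U : Set ℝ, IsOpen U → u ∈ U → τ U ≠ 0) ∧ x = (u : EReal)})
    (hb' : b' = sSup {x : EReal | ∃ u : ℝ,
      (∀ U : Set ℝ, IsOpen U → u ∈ U → τ U ≠ 0) ∧ x = (u : EReal)}) :
    a' < b' ∧
      (∀ p q : ℝ, a' < (p : EReal) → p < q → (q : EReal) < b' → τ (Ioo p q) < ⊤) ∧
      (∀ u : ℝ, a' = (u : EReal) → τ {u} = 0) ∧
      (∀ u : ℝ, b' = (u : EReal) → τ {u} = 0) :=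
  stmt_13_general a b f hanti hlc hnc hstrict τ hτ a' b' ha' hb'
end

section
/- Let f : (a,b) → ℝ be measurable with ∫_a^b 1_{f(s)≠0} ds < ∞ and ∫_a^b f(s)² ds < ∞. Then for every measure ν on ℝ^d with ν({0}) = 0 and ∫ (|x|² ∧ 1) ν(dx) < ∞, it holds that ∫_a^b ∫_{ℝ^d} (|f(s)x|² ∧ 1) ν(dx) ds < ∞. -/
/-!
Pointwise `‖c • x‖² ∧ 1 ≤ (c² + 1) 1_{c ≠ 0} (‖x‖² ∧ 1)`. Integrating in `x` and then over `s`
with `c = f s` bounds the double integral by `(∫ f² + |{f ≠ 0}|) · ∫ (‖x‖² ∧ 1) dν`.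
-/

open MeasureTheory Set ENNReal

lemma ENNReal.min_mul_le_add_one_mul_min (k t : ℝ≥0∞) : min (k * t) 1 ≤ (k + 1) * min t 1 := by
  rcases le_total t 1 with ht | ht
  · rw [min_eq_left ht]
    calc min (k * t) 1 ≤ k * t := min_le_left _ _
      _ ≤ (k + 1) * t := by gcongr; exact le_self_add
  · rw [min_eq_right ht, mul_one]
    exact (min_le_right _ _).trans le_add_self

section Smul

variable {E : Type*} [NormedAddCommGroup E] [NormedSpace ℝ E]

lemma coe_nnnorm_smul_sq (c : ℝ) (x : E) :
    (‖c • x‖₊ : ℝ≥0∞) ^ 2 = ENNReal.ofReal (c ^ 2) * (‖x‖₊ : ℝ≥0∞) ^ 2 := by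
  rw [nnnorm_smul, ENNReal.coe_mul, mul_pow, ← enorm_eq_nnnorm, Real.enorm_eq_ofReal_abs,
    ← ENNReal.ofReal_pow (abs_nonneg _), sq_abs]

lemma min_coe_nnnorm_smul_sq_le (c : ℝ) (x : E) :
    min ((‖c • x‖₊ : ℝ≥0∞) ^ 2) 1 ≤
      {c : ℝ | c ≠ 0}.indicator (fun c => ENNReal.ofReal (c ^ 2) + 1) c *
        min ((‖x‖₊ : ℝ≥0∞) ^ 2) 1 := by
  by_cases hc : c = 0
  · simp [hc]
  · rw [indicator_of_mem (show c ∈ {c : ℝ | c ≠ 0} from hc), coe_nnnorm_smul_sq]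
    exact ENNReal.min_mul_le_add_one_mul_min _ _

lemma lintegral_min_coe_nnnorm_smul_sq_le [MeasurableSpace E] (ν : Measure E) (c : ℝ) :
    ∫⁻ x, min ((‖c • x‖₊ : ℝ≥0∞) ^ 2) 1 ∂ν ≤
      {c : ℝ | c ≠ 0}.indicator (fun c => ENNReal.ofReal (c ^ 2) + 1) c *
        ∫⁻ x, min ((‖x‖₊ : ℝ≥0∞) ^ 2) 1 ∂ν := by
  rw [← lintegral_const_mul' _ _ ?_]
  · exact lintegral_mono fun x => min_coe_nnnorm_smul_sq_le c x
  · by_cases hc : c = 0 <;> simp [hc]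

end Smul

lemma lintegral_indicator_ofReal_sq_add_one_lt_top {α : Type*} [MeasurableSpace α]
    {μ : Measure α} {f : α → ℝ} (hf : Measurable f) (hsupp : μ {s | f s ≠ 0} < ⊤)
    (hsq : ∫⁻ s, ENNReal.ofReal (f s ^ 2) ∂μ < ⊤) :
    ∫⁻ s, {c : ℝ | c ≠ 0}.indicator (fun c => ENNReal.ofReal (c ^ 2) + 1) (f s) ∂μ < ⊤ := by
  have hS : MeasurableSet (f ⁻¹' {c : ℝ | c ≠ 0}) := (hf (measurableSet_singleton 0)).compl
  simp_rw [← indicator_comp_right f, Function.comp_def]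
  rw [lintegral_indicator hS, lintegral_add_right _ measurable_const, setLIntegral_const,
    one_mul]
  exact ENNReal.add_lt_top.mpr ⟨(setLIntegral_le_lintegral _ _).trans_lt hsq, hsupp⟩

/-- If `∫_a^b 1_{f≠0} ds < ∞` and `∫_a^b f² ds < ∞`, then for every Lévy measure `ν`,
`∫_a^b ∫ (|f(s)x|² ∧ 1) ν(dx) ds < ∞`. -/
theorem stmt_15 {d : ℕ} (a b : EReal) (f : ℝ → ℝ) (hmeas : Measurable f)
    (h1 : volume {s : ℝ | (a < (s : EReal) ∧ (s : EReal) < b) ∧ f s ≠ 0} < ⊤)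
    (h2 : ∫⁻ s in {s : ℝ | a < (s : EReal) ∧ (s : EReal) < b},
      ENNReal.ofReal (f s ^ 2) < ⊤) :
    ∀ ν : Measure (EuclideanSpace ℝ (Fin d)), ν {0} = 0 →
      (∫⁻ x, min ((‖x‖₊ : ℝ≥0∞) ^ 2) 1 ∂ν) < ⊤ →
      (∫⁻ s in {s : ℝ | a < (s : EReal) ∧ (s : EReal) < b},
        ∫⁻ x, min ((‖f s • x‖₊ : ℝ≥0∞) ^ 2) 1 ∂ν) < ⊤ := by
  intro ν _ hν
  set I : Set ℝ := {s : ℝ | a < (s : EReal) ∧ (s : EReal) < b}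
  have hS : MeasurableSet {s | f s ≠ 0} := (hmeas (measurableSet_singleton 0)).compl
  have hsupp : volume.restrict I {s | f s ≠ 0} < ⊤ := by
    rwa [Measure.restrict_apply hS, inter_comm]
  calc (∫⁻ s in I, ∫⁻ x, min ((‖f s • x‖₊ : ℝ≥0∞) ^ 2) 1 ∂ν)
      ≤ ∫⁻ s in I, {c : ℝ | c ≠ 0}.indicator (fun c => ENNReal.ofReal (c ^ 2) + 1) (f s) *
          ∫⁻ x, min ((‖x‖₊ : ℝ≥0∞) ^ 2) 1 ∂ν :=
        lintegral_mono fun s => lintegral_min_coe_nnnorm_smul_sq_le ν (f s)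
    _ = (∫⁻ s in I, {c : ℝ | c ≠ 0}.indicator (fun c => ENNReal.ofReal (c ^ 2) + 1) (f s)) *
          ∫⁻ x, min ((‖x‖₊ : ℝ≥0∞) ^ 2) 1 ∂ν := lintegral_mul_const' _ _ hν.ne
    _ < ⊤ := ENNReal.mul_lt_top
        (lintegral_indicator_ofReal_sq_add_one_lt_top hmeas hsupp h2) hν
end

section
/- Let f : (a,b) → ℝ be measurable and locally integrable with ∫_a^b (f(s)² ∧ 1) ds = ∞. Then for every nonzero measure ν on ℝ^d with ν({0}) = 0 and ∫ (|x|² ∧ 1) ν(dx) < ∞, it holds that ∫_a^b ∫_{ℝ^d} (|f(s)x|² ∧ 1) ν(dx) ds = ∞. -/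
open MeasureTheory Set ENNReal
open scoped NNReal

/-! A nonzero measure without an atom at the origin charges some shell `{c ≤ ‖x‖}` with
`0 < c ≤ 1`. On that shell `|f(s)x|² ∧ 1 ≥ c² (f(s)² ∧ 1)`, so the inner integral is at least
`c² ν({c ≤ ‖x‖}) (f(s)² ∧ 1)`, a positive multiple of an integrand whose integral is infinite. -/

theorem exists_measure_setOf_le_nnnorm_ne_zero {E : Type*} [NormedAddCommGroup E]
    [MeasurableSpace E] {ν : Measure E} (hν : ν ≠ 0) (hν0 : ν {0} = 0) :
    ∃ c : ℝ≥0, 0 < c ∧ c ≤ 1 ∧ ν {x | c ≤ ‖x‖₊} ≠ 0 := by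
  by_contra! h
  have hcover : univ ⊆ {0} ∪ ⋃ n : ℕ, {x : E | (n + 1 : ℝ≥0)⁻¹ ≤ ‖x‖₊} := by
    intro x _
    rcases eq_or_ne x 0 with rfl | hx
    · exact .inl rfl
    obtain ⟨n, hn⟩ := exists_nat_one_div_lt (nnnorm_pos.2 hx)
    exact .inr (mem_iUnion.2 ⟨n, by simpa using hn.le⟩)
  refine hν (Measure.measure_univ_eq_zero.1 (measure_mono_null hcover ?_))
  refine measure_union_null hν0 (measure_iUnion_null fun n => h _ (by positivity) ?_)
  exact inv_le_one_of_one_le₀ (by simp)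

theorem ENNReal.mul_min_one_le_min_mul_one {ε r s : ℝ≥0∞} (hε : ε ≤ 1) (hεr : ε ≤ r) :
    ε * min s 1 ≤ min (s * r) 1 :=
  le_min (by rw [mul_comm s]; gcongr; exact min_le_left _ _)
    ((mul_le_mul' hε (min_le_right _ _)).trans_eq (one_mul 1))

theorem sq_mul_measure_mul_min_le_lintegral {𝕜 E : Type*} [NormedField 𝕜]
    [NormedAddCommGroup E] [NormedSpace 𝕜 E] [MeasurableSpace E] [OpensMeasurableSpace E]
    (ν : Measure E) {c : ℝ≥0} (hc : c ≤ 1) (t : 𝕜) :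
    (c : ℝ≥0∞) ^ 2 * ν {x | c ≤ ‖x‖₊} * min ((‖t‖₊ : ℝ≥0∞) ^ 2) 1 ≤
      ∫⁻ x, min ((‖t • x‖₊ : ℝ≥0∞) ^ 2) 1 ∂ν := by
  set C := {x : E | c ≤ ‖x‖₊}
  have hC : MeasurableSet C := measurableSet_le measurable_const measurable_nnnorm
  calc (c : ℝ≥0∞) ^ 2 * ν C * min ((‖t‖₊ : ℝ≥0∞) ^ 2) 1
      = ∫⁻ x, C.indicator (fun _ => (c : ℝ≥0∞) ^ 2 * min ((‖t‖₊ : ℝ≥0∞) ^ 2) 1) x ∂ν := by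
        rw [lintegral_indicator_const hC]; ring
    _ ≤ ∫⁻ x, min ((‖t • x‖₊ : ℝ≥0∞) ^ 2) 1 ∂ν := by
        refine lintegral_mono (indicator_le fun x hx => ?_)
        rw [nnnorm_smul, ENNReal.coe_mul, mul_pow]
        exact ENNReal.mul_min_one_le_min_mul_one (pow_le_one₀ bot_le (by exact_mod_cast hc))
          (by gcongr; exact_mod_cast (hx : c ≤ ‖x‖₊))

theorem ENNReal.ofReal_sq_eq_nnnorm_sq (t : ℝ) : ENNReal.ofReal (t ^ 2) = (‖t‖₊ : ℝ≥0∞) ^ 2 := by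
  rw [← sq_abs, ENNReal.ofReal_pow (abs_nonneg _), ← Real.norm_eq_abs, ofReal_norm,
    enorm_eq_nnnorm]

theorem stmt_18_general {d : ℕ} (a b : EReal) (f : ℝ → ℝ)
    (hdiv : ∫⁻ s in {s : ℝ | a < (s : EReal) ∧ (s : EReal) < b},
      min (ENNReal.ofReal (f s ^ 2)) 1 = ⊤) :
    ∀ ν : Measure (EuclideanSpace ℝ (Fin d)), ν ≠ 0 → ν {0} = 0 →
      (∫⁻ x, min ((‖x‖₊ : ℝ≥0∞) ^ 2) 1 ∂ν) < ⊤ →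
      (∫⁻ s in {s : ℝ | a < (s : EReal) ∧ (s : EReal) < b},
        ∫⁻ x, min ((‖f s • x‖₊ : ℝ≥0∞) ^ 2) 1 ∂ν) = ⊤ := by
  intro ν hν hν0 _
  obtain ⟨c, hc0, hc1, hνc⟩ := exists_measure_setOf_le_nnnorm_ne_zero hν hν0
  have hK : (c : ℝ≥0∞) ^ 2 * ν {x | c ≤ ‖x‖₊} ≠ 0 :=
    mul_ne_zero (pow_ne_zero _ (by exact_mod_cast hc0.ne')) hνc
  rw [eq_top_iff, ← ENNReal.mul_top hK, ← hdiv]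
  calc _ ≤ _ := lintegral_const_mul_le _ _
    _ ≤ _ := lintegral_mono fun s => by
      simpa only [ENNReal.ofReal_sq_eq_nnnorm_sq] using
        sq_mul_measure_mul_min_le_lintegral ν hc1 (f s)

/-- If `f` is locally integrable on `(a,b)` and `∫_a^b (f² ∧ 1) ds = ∞`, then for every
nonzero Lévy measure `ν`, `∫_a^b ∫ (|f(s)x|² ∧ 1) ν(dx) ds = ∞`. -/
theorem stmt_18 {d : ℕ} (a b : EReal) (hab : a < b) (f : ℝ → ℝ) (hmeas : Measurable f)
    (hloc : ∀ p q : ℝ, a < (p : EReal) → p < q → (q : EReal) < b →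
      IntegrableOn f (Icc p q) volume)
    (hdiv : ∫⁻ s in {s : ℝ | a < (s : EReal) ∧ (s : EReal) < b},
      min (ENNReal.ofReal (f s ^ 2)) 1 = ⊤) :
    ∀ ν : Measure (EuclideanSpace ℝ (Fin d)), ν ≠ 0 → ν {0} = 0 →
      (∫⁻ x, min ((‖x‖₊ : ℝ≥0∞) ^ 2) 1 ∂ν) < ⊤ →
      (∫⁻ s in {s : ℝ | a < (s : EReal) ∧ (s : EReal) < b},
        ∫⁻ x, min ((‖f s • x‖₊ : ℝ≥0∞) ^ 2) 1 ∂ν) = ⊤ :=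
  stmt_18_general a b f hdiv
end

section
/- Let f : (a,b) → ℝ be measurable with ∫_a^b 1_{f(s)≠0} ds < ∞ and such that k(r) = ∫_a^b f(s)² 1_{|f(s)| ≤ 1/r} ds = O(1/r) and h(r) = ∫_a^b 1_{|f(s)| > 1/r} ds = O(r) as r ↓ 0. Then for every measure ν on ℝ^d with ν({0}) = 0 and ∫ (|x| ∧ 1) ν(dx) < ∞, it holds that ∫_a^b ∫_{ℝ^d} (|f(s)x|² ∧ 1) ν(dx) ds < ∞. -/
/-!
Write `S` for the interval `(a, b)` and `N(x) = ∫_S (|f(s)| ‖x‖)² ∧ 1 ds`. By Tonelli it suffices to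
find `K < ∞` with `N(x) ≤ K (‖x‖ ∧ 1)`. For `‖x‖ ≥ r₀` bound the integrand by `1_{f ≠ 0}`. For
`‖x‖ = r < r₀` split `S` at `|f| = 1/r`: on `|f| ≤ 1/r` the integrand is `f² r²`, contributing
`k(r) r² = O(r)`, and on `|f| > 1/r` it is at most `1`, contributing `h(r) = O(r)`. Tonelli needs
`ν` to be σ-finite, which follows from `ν {0} = 0` and the finiteness of `∫ ‖x‖ ∧ 1 dν`.
-/

open MeasureTheory Set ENNReal

namespace MeasureTheory.Measure

variable {α : Type*} [MeasurableSpace α] {μ : Measure α} {S : Set α} {P : α → Prop}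

lemma restrict_restrict_setOf (hP : MeasurableSet {s | P s}) :
    (μ.restrict S).restrict {s | P s} = μ.restrict {s | s ∈ S ∧ P s} := by
  rw [restrict_restrict hP, ofPred_and, inter_comm]
  rfl

lemma restrict_apply_setOf (hP : MeasurableSet {s | P s}) :
    μ.restrict S {s | P s} = μ {s | s ∈ S ∧ P s} := by
  rw [← restrict_apply_univ, restrict_restrict_setOf hP, restrict_apply_univ]

end MeasureTheory.Measure

section LevyMeasure

variable {E : Type*} [NormedAddCommGroup E] [MeasurableSpace E] [OpensMeasurableSpace E]
  {ν : Measure E}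

lemma measure_norm_gt_lt_top (hν : ∫⁻ x, min ‖x‖ₑ 1 ∂ν < ∞) {ε : ℝ} (hε : 0 < ε) :
    ν {x | ε < ‖x‖} < ∞ := by
  have hε' : ENNReal.ofReal (min ε 1) ≠ 0 := by simp [hε]
  have hsub : {x : E | ε < ‖x‖} ⊆ {x | ENNReal.ofReal (min ε 1) ≤ min ‖x‖ₑ 1} := by
    intro x hx
    refine le_min ?_ (ofReal_le_one.mpr (min_le_right _ _))
    rw [← ofReal_norm]
    exact ofReal_le_ofReal ((min_le_left _ _).trans (le_of_lt hx))
  calc ν {x | ε < ‖x‖}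
      ≤ (∫⁻ x, min ‖x‖ₑ 1 ∂ν) / ENNReal.ofReal (min ε 1) :=
        (measure_mono hsub).trans
          (meas_ge_le_lintegral_div (by fun_prop) hε' ofReal_ne_top)
    _ < ∞ := div_lt_top hν.ne hε'

lemma sigmaFinite_of_lintegral_min_norm_lt_top (h0 : ν {0} = 0)
    (hν : ∫⁻ x, min ‖x‖ₑ 1 ∂ν < ∞) : SigmaFinite ν := by
  refine Measure.sigmaFinite_of_countable
    (S := insert {0} (range fun n : ℕ => {x : E | 1 / (n + 1 : ℝ) < ‖x‖}))
    ((countable_range _).insert _) ?_ ?_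
  · rintro s (rfl | ⟨n, rfl⟩)
    exacts [h0.trans_lt zero_lt_top, measure_norm_gt_lt_top hν (by positivity)]
  · refine eq_univ_of_forall fun x => ?_
    rcases eq_or_ne x 0 with rfl | hx
    · exact ⟨{0}, mem_insert _ _, rfl⟩
    · obtain ⟨n, hn⟩ := exists_nat_one_div_lt (norm_pos_iff.mpr hx)
      exact ⟨_, mem_insert_of_mem _ ⟨n, rfl⟩, hn⟩

end LevyMeasure

section Profile

variable {α : Type*} [MeasurableSpace α] {μ : Measure α} {f : α → ℝ}

lemma lintegral_min_sq_le_measure_ne_zero (hf : Measurable f) (t : ℝ≥0∞) :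
    ∫⁻ s, min ((‖f s‖ₑ * t) ^ 2) 1 ∂μ ≤ μ {s | f s ≠ 0} := by
  have hne : MeasurableSet {s | f s ≠ 0} := (hf (measurableSet_singleton 0)).compl
  calc ∫⁻ s, min ((‖f s‖ₑ * t) ^ 2) 1 ∂μ
      ≤ ∫⁻ s, {s | f s ≠ 0}.indicator 1 s ∂μ := by
        refine lintegral_mono fun s => ?_
        by_cases hs : f s = 0 <;> simp [hs]
    _ = μ {s | f s ≠ 0} := lintegral_indicator_one hne

lemma lintegral_min_sq_le_of_pos (hf : Measurable f) {t : ℝ} (ht : 0 < t) :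
    ∫⁻ s, min ((‖f s‖ₑ * ENNReal.ofReal t) ^ 2) 1 ∂μ ≤
      (∫⁻ s in {s | |f s| ≤ 1 / t}, ENNReal.ofReal (f s ^ 2) ∂μ) * ENNReal.ofReal (t ^ 2) +
        μ {s | 1 / t < |f s|} := by
  set A := {s | |f s| ≤ 1 / t}
  have hA : MeasurableSet A := measurableSet_le hf.abs measurable_const
  have hAc : Aᶜ = {s | 1 / t < |f s|} := by ext; simp [A]
  rw [← lintegral_add_compl _ hA, ← lintegral_mul_const' _ _ ofReal_ne_top, ← hAc]
  gcongr with s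
  · refine (min_le_left _ _).trans_eq ?_
    rw [Real.enorm_eq_ofReal_abs, ← ofReal_mul (abs_nonneg _), ← ofReal_pow (by positivity),
      ← ofReal_mul (sq_nonneg _), mul_pow, sq_abs]
  · exact (lintegral_mono fun _ => min_le_right _ _).trans_eq (setLIntegral_one _)

lemma exists_lintegral_min_sq_le_mul_min (hf : Measurable f) (h0 : μ {s | f s ≠ 0} < ∞)
    (hk : ∃ C : ℝ, 0 < C ∧ ∃ r₀ : ℝ, 0 < r₀ ∧ ∀ r : ℝ, 0 < r → r ≤ r₀ →
      ∫⁻ s in {s | |f s| ≤ 1 / r}, ENNReal.ofReal (f s ^ 2) ∂μ ≤ ENNReal.ofReal (C / r))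
    (hh : ∃ C : ℝ, 0 < C ∧ ∃ r₀ : ℝ, 0 < r₀ ∧ ∀ r : ℝ, 0 < r → r ≤ r₀ →
      μ {s | 1 / r < |f s|} ≤ ENNReal.ofReal (C * r)) :
    ∃ K : ℝ≥0∞, K ≠ ∞ ∧ ∀ t : ℝ, 0 ≤ t →
      ∫⁻ s, min ((‖f s‖ₑ * ENNReal.ofReal t) ^ 2) 1 ∂μ ≤ K * min (ENNReal.ofReal t) 1 := by
  obtain ⟨C₁, hC₁, r₁, hr₁, hk⟩ := hk
  obtain ⟨C₂, hC₂, r₂, hr₂, hh⟩ := hh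
  set r₀ := min (min r₁ r₂) 1
  have hr₀ : 0 < r₀ := lt_min (lt_min hr₁ hr₂) one_pos
  have hr₀' : ENNReal.ofReal r₀ ≠ 0 := by simp [hr₀]
  refine ⟨ENNReal.ofReal (C₁ + C₂) + μ {s | f s ≠ 0} / ENNReal.ofReal r₀,
    add_ne_top.mpr ⟨ofReal_ne_top, (div_lt_top h0.ne hr₀').ne⟩, fun t ht => ?_⟩
  rcases ht.eq_or_lt with rfl | ht
  · simp
  rcases le_or_gt t r₀ with htr | htr
  · have ht1 : min (ENNReal.ofReal t) 1 = ENNReal.ofReal t :=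
      min_eq_left (ofReal_le_one.mpr (htr.trans (min_le_right _ _)))
    calc ∫⁻ s, min ((‖f s‖ₑ * ENNReal.ofReal t) ^ 2) 1 ∂μ
        ≤ ENNReal.ofReal (C₁ / t) * ENNReal.ofReal (t ^ 2) + ENNReal.ofReal (C₂ * t) := by
          refine (lintegral_min_sq_le_of_pos hf ht).trans ?_
          gcongr
          exacts [hk t ht (by grind), hh t ht (by grind)]
      _ = ENNReal.ofReal (C₁ + C₂) * ENNReal.ofReal t := by
          rw [← ofReal_mul (by positivity), ← ofReal_add (by positivity) (by positivity),
            ← ofReal_mul (by positivity)]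
          congr 1
          field_simp
      _ ≤ _ := by rw [ht1]; gcongr; exact le_self_add
  · calc ∫⁻ s, min ((‖f s‖ₑ * ENNReal.ofReal t) ^ 2) 1 ∂μ
        ≤ μ {s | f s ≠ 0} / ENNReal.ofReal r₀ * ENNReal.ofReal r₀ :=
          (lintegral_min_sq_le_measure_ne_zero hf _).trans_eq
            (ENNReal.div_mul_cancel hr₀' ofReal_ne_top).symm
      _ ≤ _ := by
          gcongr
          · exact le_add_self
          · exact le_min (ofReal_le_ofReal htr.le) (ofReal_le_one.mpr (min_le_right _ _))

lemma lintegral_lintegral_min_sq_smul_lt_top [SFinite μ] {E : Type*} [NormedAddCommGroup E]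
    [NormedSpace ℝ E] [MeasurableSpace E] [OpensMeasurableSpace E] {ν : Measure E} [SFinite ν]
    (hf : Measurable f) {K : ℝ≥0∞} (hK : K ≠ ∞)
    (hbound : ∀ t : ℝ, 0 ≤ t →
      ∫⁻ s, min ((‖f s‖ₑ * ENNReal.ofReal t) ^ 2) 1 ∂μ ≤ K * min (ENNReal.ofReal t) 1)
    (hν : ∫⁻ x, min ‖x‖ₑ 1 ∂ν < ∞) :
    ∫⁻ s, ∫⁻ x, min (‖f s • x‖ₑ ^ 2) 1 ∂ν ∂μ < ∞ := by
  simp_rw [enorm_smul]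
  rw [lintegral_lintegral_swap (by fun_prop)]
  calc ∫⁻ x, ∫⁻ s, min ((‖f s‖ₑ * ‖x‖ₑ) ^ 2) 1 ∂μ ∂ν
      ≤ ∫⁻ x, K * min ‖x‖ₑ 1 ∂ν :=
        lintegral_mono fun x => by simpa only [ofReal_norm] using hbound ‖x‖ (norm_nonneg x)
    _ = K * ∫⁻ x, min ‖x‖ₑ 1 ∂ν := lintegral_const_mul' _ _ hK
    _ < ∞ := mul_lt_top hK.lt_top hν

end Profile

/-- If `∫_a^b 1_{f≠0} ds < ∞`, `k(r) = ∫_a^b f² 1_{|f|≤1/r} ds = O(1/r)` and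
`h(r) = ∫_a^b 1_{|f|>1/r} ds = O(r)` as `r ↓ 0`, then for every Lévy measure `ν`
of type A or B, `∫_a^b ∫ (|f(s)x|² ∧ 1) ν(dx) ds < ∞`. -/
theorem stmt_19 {d : ℕ} (a b : EReal) (f : ℝ → ℝ) (hmeas : Measurable f)
    (h0 : volume {s : ℝ | (a < (s : EReal) ∧ (s : EReal) < b) ∧ f s ≠ 0} < ⊤)
    (hk : ∃ C : ℝ, 0 < C ∧ ∃ r₀ : ℝ, 0 < r₀ ∧ ∀ r : ℝ, 0 < r → r ≤ r₀ →
      (∫⁻ s in {s : ℝ | (a < (s : EReal) ∧ (s : EReal) < b) ∧ |f s| ≤ 1 / r},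
        ENNReal.ofReal (f s ^ 2)) ≤ ENNReal.ofReal (C / r))
    (hh : ∃ C : ℝ, 0 < C ∧ ∃ r₀ : ℝ, 0 < r₀ ∧ ∀ r : ℝ, 0 < r → r ≤ r₀ →
      volume {s : ℝ | (a < (s : EReal) ∧ (s : EReal) < b) ∧ 1 / r < |f s|} ≤
        ENNReal.ofReal (C * r)) :
    ∀ ν : Measure (EuclideanSpace ℝ (Fin d)), ν {0} = 0 →
      (∫⁻ x, min (‖x‖₊ : ℝ≥0∞) 1 ∂ν) < ⊤ →
      (∫⁻ s in {s : ℝ | a < (s : EReal) ∧ (s : EReal) < b},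
        ∫⁻ x, min ((‖f s • x‖₊ : ℝ≥0∞) ^ 2) 1 ∂ν) < ⊤ := by
  intro ν hν0 hν
  change ∫⁻ x, min ‖x‖ₑ 1 ∂ν < ∞ at hν
  have := sigmaFinite_of_lintegral_min_norm_lt_top hν0 hν
  set S := {s : ℝ | a < (s : EReal) ∧ (s : EReal) < b}
  have hsmall {r : ℝ} : MeasurableSet {s | |f s| ≤ 1 / r} :=
    measurableSet_le hmeas.abs measurable_const
  have hlarge {r : ℝ} : MeasurableSet {s | 1 / r < |f s|} :=
    measurableSet_lt measurable_const hmeas.abs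
  obtain ⟨K, hK, hbound⟩ := exists_lintegral_min_sq_le_mul_min (μ := volume.restrict S) hmeas
    (by rwa [Measure.restrict_apply_setOf (P := (f · ≠ 0)) (hmeas (measurableSet_singleton 0)).compl])
    (by
      obtain ⟨C, hC, r₀, hr₀, hk⟩ := hk
      exact ⟨C, hC, r₀, hr₀, fun r hr hrr => by
        rw [Measure.restrict_restrict_setOf hsmall]; exact hk r hr hrr⟩)
    (by
      obtain ⟨C, hC, r₀, hr₀, hh⟩ := hh
      exact ⟨C, hC, r₀, hr₀, fun r hr hrr => by
        rw [Measure.restrict_apply_setOf hlarge]; exact hh r hr hrr⟩)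
  exact lintegral_lintegral_min_sq_smul_lt_top hmeas hK hbound hν
end
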